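/- arXiv:2605.19526 — 6 statements merged into one kernel-verified Lean document; each statement's English description precedes it below -/
import Mathlib

section
/- Let V = F_q^n and let F be a family of subspaces with diam(F) ≤ d, where n ≥ d+1. Then for every 0 ≤ k < n−k, |F(k)| + |F(n−k)| ≤ C_q(n,k). Moreover, equality holds if and only if one of the two layers is empty and the other consists of all subspaces of the corresponding dimension. -/
/-
Two subspaces `A ∈ F(k)` and `B ∈ F(n-k)` can never be complementary, since then
`Δ(A,B) = n > d`. Complementarity is a biregular bipartite relation between the two layers
`G(k)` and `G(n-k)`: every `k`-subspace has `q^(k(n-k))` complements and vice versa. So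
`F(k) ∪ F(n-k)` is an independent set in a regular bipartite graph with sides of size `C_q(n,k)`,
and double counting edges bounds its size by `C_q(n,k)`. In the equality case every edge meets
`F(k)` or `F(n-k)`; since any two subspaces of equal dimension have a common complement, any
`A ∈ G(k)` and `B ∈ G(n-k)` are joined by a path of length three, which forces one layer
of `F` to be empty.
-/

open Module

/-- The subspace distance `Δ(U,W) = dim U + dim W − 2 dim(U∩W)`. -/
noncomputable def sdelta (K V : Type*) [Field K] [AddCommGroup V] [Module K V]
    (U W : Submodule K V) : ℕ :=
  finrank K ↥U + finrank K ↥W - 2 * finrank K ↥(U ⊓ W)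

/-- The Gaussian binomial coefficient, via the `q`-Pascal recursion. -/
def gauss (q : ℕ) : ℕ → ℕ → ℕ
  | _, 0 => 1
  | 0, _ + 1 => 0
  | n + 1, k + 1 => gauss q n k + q ^ (k + 1) * gauss q n (k + 1)

open Finset

namespace Finset

variable {α β : Type*} (r : α → β → Prop) [∀ a b, Decidable (r a b)] {s X : Finset α}
  {t Y : Finset β} {c : ℕ}

theorem card_eq_card_of_biregular (hc : 0 < c) (hs : ∀ a ∈ s, #(t.bipartiteAbove r a) = c)
    (ht : ∀ b ∈ t, #(s.bipartiteBelow r b) = c) : #s = #t :=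
  Nat.eq_of_mul_eq_mul_right hc (card_mul_eq_card_mul r hs ht)

theorem sum_card_bipartiteBelow_sdiff [DecidableEq β]
    (hs : ∀ a ∈ s, #(t.bipartiteAbove r a) = c) (hX : X ⊆ s)
    (hXY : ∀ a ∈ X, ∀ b ∈ Y, ¬ r a b) :
    ∑ b ∈ t \ Y, #(X.bipartiteBelow r b) = #X * c := by
  have hedges : ∀ a ∈ X, (t \ Y).bipartiteAbove r a = t.bipartiteAbove r a := fun a ha => by
    ext b
    simp only [mem_bipartiteAbove, mem_sdiff]
    exact ⟨fun h => ⟨h.1.1, h.2⟩,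
      fun h => ⟨⟨h.1, fun hb => hXY a ha b hb h.2⟩, h.2⟩⟩
  rw [← sum_card_bipartiteAbove_eq_sum_card_bipartiteBelow, sum_congr rfl fun a ha => by
    rw [hedges a ha, hs a (hX ha)], sum_const, smul_eq_mul]

variable {r}

theorem card_add_card_le_of_biregular (hc : 0 < c) (hs : ∀ a ∈ s, #(t.bipartiteAbove r a) = c)
    (ht : ∀ b ∈ t, #(s.bipartiteBelow r b) = c) (hX : X ⊆ s) (hY : Y ⊆ t)
    (hXY : ∀ a ∈ X, ∀ b ∈ Y, ¬ r a b) : #X + #Y ≤ #s := by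
  classical
  have hedges : #X * c ≤ #(t \ Y) * c := by
    rw [← sum_card_bipartiteBelow_sdiff r hs hX hXY, ← smul_eq_mul, ← sum_const]
    exact sum_le_sum fun b hb => (card_le_card (filter_subset_filter _ hX)).trans
      (ht b (mem_sdiff.1 hb).1).le
  have hXle := Nat.le_of_mul_le_mul_right hedges hc
  rw [card_sdiff_of_subset hY] at hXle
  have := card_le_card hY
  have := card_eq_card_of_biregular r hc hs ht
  omega

theorem mem_or_mem_of_card_add_card_eq (hc : 0 < c) (hs : ∀ a ∈ s, #(t.bipartiteAbove r a) = c)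
    (ht : ∀ b ∈ t, #(s.bipartiteBelow r b) = c) (hX : X ⊆ s) (hY : Y ⊆ t)
    (hXY : ∀ a ∈ X, ∀ b ∈ Y, ¬ r a b) (h : #X + #Y = #s) :
    ∀ a ∈ s, ∀ b ∈ t, r a b → a ∈ X ∨ b ∈ Y := by
  classical
  intro a ha b hb hab
  by_contra! hne
  have hle : ∀ b ∈ t \ Y, #(X.bipartiteBelow r b) ≤ #(s.bipartiteBelow r b) :=
    fun b _ => card_le_card (filter_subset_filter _ hX)
  have hsum :
      ∑ b ∈ t \ Y, #(X.bipartiteBelow r b) = ∑ b ∈ t \ Y, #(s.bipartiteBelow r b) := by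
    rw [sum_card_bipartiteBelow_sdiff r hs hX hXY,
      sum_congr rfl fun b hb => ht b (mem_sdiff.1 hb).1, sum_const, smul_eq_mul,
      card_sdiff_of_subset hY, ← card_eq_card_of_biregular r hc hs ht]
    congr 1
    omega
  have hfull := eq_of_subset_of_card_le (filter_subset_filter _ hX)
    ((sum_eq_sum_iff_of_le hle).1 hsum b (mem_sdiff.2 ⟨hb, hne.2⟩)).ge
  have haX : a ∈ X.bipartiteBelow r b := by
    rw [bipartiteBelow, hfull]
    exact mem_filter.2 ⟨ha, hab⟩
  exact hne.1 ((mem_bipartiteBelow r).1 haX).1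

theorem card_add_card_eq_iff_of_biregular (hc : 0 < c)
    (hs : ∀ a ∈ s, #(t.bipartiteAbove r a) = c) (ht : ∀ b ∈ t, #(s.bipartiteBelow r b) = c)
    (hconn : ∀ a ∈ s, ∀ b ∈ t, ∃ b' ∈ t, ∃ a' ∈ s, r a b' ∧ r a' b' ∧ r a' b)
    (hX : X ⊆ s) (hY : Y ⊆ t) (hXY : ∀ a ∈ X, ∀ b ∈ Y, ¬ r a b) :
    #X + #Y = #s ↔ (X = s ∧ Y = ∅) ∨ (X = ∅ ∧ Y = t) := by
  have hst := card_eq_card_of_biregular r hc hs ht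
  constructor
  · intro h
    obtain rfl | ⟨b, hb⟩ := Y.eq_empty_or_nonempty
    · exact .inl ⟨eq_of_subset_of_card_le hX (by simpa using h.ge), rfl⟩
    obtain rfl : X = ∅ := by
      refine eq_empty_of_forall_notMem fun a ha => ?_
      obtain ⟨b', hb', a', ha', hab', ha'b', ha'b⟩ := hconn a (hX ha) b (hY hb)
      rcases mem_or_mem_of_card_add_card_eq hc hs ht hX hY hXY h a' ha' b' hb' ha'b' with h' | h'
      · exact hXY a' h' b hb ha'b
      · exact hXY a ha b' h' hab'
    exact .inr ⟨rfl, eq_of_subset_of_card_le hY (by simpa [hst] using h.ge)⟩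
  · rintro (⟨rfl, rfl⟩ | ⟨rfl, rfl⟩)
    · simp
    · simp [hst]

end Finset

theorem Set.ncard_add_ncard_le_and_eq_iff_of_biregular {α β : Type*} [Finite α] [Finite β]
    {r : α → β → Prop} {S X : Set α} {T Y : Set β} {c : ℕ} (hc : 0 < c)
    (hS : ∀ a ∈ S, {b ∈ T | r a b}.ncard = c) (hT : ∀ b ∈ T, {a ∈ S | r a b}.ncard = c)
    (hconn : ∀ a ∈ S, ∀ b ∈ T, ∃ b' ∈ T, ∃ a' ∈ S, r a b' ∧ r a' b' ∧ r a' b)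
    (hX : X ⊆ S) (hY : Y ⊆ T) (hXY : ∀ a ∈ X, ∀ b ∈ Y, ¬ r a b) :
    X.ncard + Y.ncard ≤ S.ncard ∧
      (X.ncard + Y.ncard = S.ncard ↔ (X = S ∧ Y = ∅) ∨ (X = ∅ ∧ Y = T)) := by
  classical
  lift S to Finset α using S.toFinite
  lift T to Finset β using T.toFinite
  lift X to Finset α using X.toFinite
  lift Y to Finset β using Y.toFinite
  simp only [← coe_bipartiteAbove, ← coe_bipartiteBelow, Set.ncard_coe_finset,
    coe_inj, coe_eq_empty, mem_coe] at *
  exact ⟨card_add_card_le_of_biregular hc hS hT hX hY hXY,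
    card_add_card_eq_iff_of_biregular hc hS hT hconn hX hY hXY⟩

theorem prod_range_pow_succ_sub_pow_succ {R : Type*} [CommRing R] (q : R) (m k : ℕ) :
    ∏ i ∈ range (k + 1), (q ^ (m + 1) - q ^ i) =
      q ^ k * (q ^ (m + 1) - 1) * ∏ i ∈ range k, (q ^ m - q ^ i) := by
  rw [prod_range_succ', pow_zero]
  simp_rw [pow_succ' q, ← mul_sub]
  rw [prod_mul_distrib, prod_const, card_range]
  ring

theorem gauss_mul_prod_range_pow_sub_pow (q : ℕ) : ∀ n k,
    (gauss q n k : ℤ) * ∏ i ∈ range k, ((q : ℤ) ^ k - q ^ i) =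
      ∏ i ∈ range k, ((q : ℤ) ^ n - q ^ i)
  | _, 0 => by simp [gauss]
  | 0, k + 1 => by simp [gauss, prod_range_succ']
  | n + 1, k + 1 => by
    have h₁ := gauss_mul_prod_range_pow_sub_pow q n k
    have h₂ := gauss_mul_prod_range_pow_sub_pow q n (k + 1)
    rw [prod_range_pow_succ_sub_pow_succ, prod_range_succ (fun i => (q : ℤ) ^ n - q ^ i)] at h₂
    rw [gauss, prod_range_pow_succ_sub_pow_succ, prod_range_pow_succ_sub_pow_succ]
    push_cast
    linear_combination
      ((q : ℤ) ^ k * ((q : ℤ) ^ (k + 1) - 1)) * h₁ + (q : ℤ) ^ (k + 1) * h₂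

namespace Submodule

section Ring

variable {R M : Type*} [Ring R] [AddCommGroup M] [Module R M]

theorem exists_notMem_of_ne_top_of_ne_top {U W : Submodule R M} (hU : U ≠ ⊤) (hW : W ≠ ⊤) :
    ∃ v, v ∉ U ∧ v ∉ W := by
  obtain ⟨u, -, huU⟩ := SetLike.exists_of_lt hU.lt_top
  obtain ⟨w, -, hwW⟩ := SetLike.exists_of_lt hW.lt_top
  by_cases huW : u ∈ W
  · by_cases hwU : w ∈ U
    · exact ⟨u + w, fun h => huU ((U.add_mem_iff_left hwU).1 h),
        fun h => hwW ((W.add_mem_iff_right huW).1 h)⟩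
    · exact ⟨w, hwU, hwW⟩
  · exact ⟨u, huU, huW⟩

noncomputable def isComplProjEquivLinearMap {A B : Submodule R M} (h : IsCompl A B) :
    {f : M →ₗ[R] A // ∀ x : A, f x = x} ≃ (B →ₗ[R] A) where
  toFun f := f.1.domRestrict B
  invFun g := ⟨LinearMap.ofIsCompl h LinearMap.id g, LinearMap.ofIsCompl_apply_left h⟩
  left_inv f := Subtype.ext <| LinearMap.ofIsCompl_eq h (fun x => (f.2 x).symm) fun _ => rfl
  right_inv _ := LinearMap.ext <| LinearMap.ofIsCompl_apply_right h

end Ring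

variable {K V : Type*} [Field K] [AddCommGroup V] [Module K V]

theorem isCompl_of_sup_eq_top [FiniteDimensional K V] {U C : Submodule K V} (h : U ⊔ C = ⊤)
    (hd : finrank K U + finrank K C = finrank K V) : IsCompl U C := by
  refine ⟨?_, codisjoint_iff.2 h⟩
  rw [disjoint_iff, ← finrank_eq_zero]
  have := finrank_sup_add_finrank_inf_eq U C
  rw [h, finrank_top] at this
  omega

theorem isCompl_sup_span_singleton [FiniteDimensional K V] {U C : Submodule K V} {v : V}
    (hv : v ∉ U) (h : IsCompl (U ⊔ span K {v}) C) : IsCompl U (C ⊔ span K {v}) := by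
  have hvC : v ∉ C := fun hvC => hv <| by
    rw [(disjoint_iff_inf_le.1 h.disjoint ⟨mem_sup_right (mem_span_singleton_self v), hvC⟩ :
      v = 0)]
    exact zero_mem U
  refine isCompl_of_sup_eq_top ?_ ?_
  · rw [sup_comm C, ← sup_assoc, h.sup_eq_top]
  · have := finrank_add_eq_of_isCompl h
    rw [finrank_sup_span_singleton hv] at this
    rw [finrank_sup_span_singleton hvC]
    omega

theorem exists_isCompl_isCompl_of_finrank_eq [FiniteDimensional K V] {U W : Submodule K V}
    (h : finrank K U = finrank K W) : ∃ C, IsCompl U C ∧ IsCompl W C := by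
  induction hd : finrank K V - finrank K U generalizing U W with
  | zero =>
    have hU : U = ⊤ := eq_top_of_finrank_eq (by have := U.finrank_le; omega)
    have hW : W = ⊤ := eq_top_of_finrank_eq (by have := W.finrank_le; omega)
    exact ⟨⊥, hU ▸ isCompl_top_bot, hW ▸ isCompl_top_bot⟩
  | succ m ih =>
    have hne : ∀ X : Submodule K V, finrank K X = finrank K U → X ≠ ⊤ := fun X hX hX' => by
      rw [hX', finrank_top] at hX
      omega
    obtain ⟨v, hvU, hvW⟩ := exists_notMem_of_ne_top_of_ne_top (hne U rfl) (hne W h.symm)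
    obtain ⟨C, hUC, hWC⟩ := ih (U := U ⊔ span K {v}) (W := W ⊔ span K {v})
      (by rw [finrank_sup_span_singleton hvU, finrank_sup_span_singleton hvW, h])
      (by rw [finrank_sup_span_singleton hvU]; have := U.finrank_le; omega)
    exact ⟨_, isCompl_sup_span_singleton hvU hUC, isCompl_sup_span_singleton hvW hWC⟩

theorem ncard_isCompl [Fintype K] [Finite V] (A : Submodule K V) :
    {B | IsCompl A B}.ncard = Fintype.card K ^ (finrank K A * (finrank K V - finrank K A)) := by
  obtain ⟨B, h⟩ := A.exists_isCompl
  rw [← Nat.card_coe_set_eq]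
  change Nat.card {B // IsCompl A B} = _
  rw [Nat.card_congr (A.isComplEquivProj.trans (isComplProjEquivLinearMap h)),
    Module.natCard_eq_pow_finrank (K := K), Nat.card_eq_fintype_card, finrank_linearMap,
    ← finrank_add_eq_of_isCompl h, Nat.add_sub_cancel_left, mul_comm]

theorem ncard_finrank_eq_and_isCompl [Fintype K] [Finite V] {A : Submodule K V} {k m : ℕ}
    (hA : finrank K A = k) (hkm : k + m = finrank K V) :
    {B : Submodule K V | finrank K B = m ∧ IsCompl A B}.ncard = Fintype.card K ^ (k * m) := by
  have hcompl : {B : Submodule K V | finrank K B = m ∧ IsCompl A B} = {B | IsCompl A B} :=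
    Set.ext fun B => and_iff_right_of_imp fun h => by
      have := finrank_add_eq_of_isCompl h
      omega
  rw [hcompl, ncard_isCompl, hA, ← hkm, Nat.add_sub_cancel_left]

theorem exists_isCompl_isCompl_isCompl [FiniteDimensional K V] {A B : Submodule K V}
    (h : finrank K A + finrank K B = finrank K V) :
    ∃ B' : Submodule K V, finrank K B' = finrank K B ∧
      ∃ A' : Submodule K V, finrank K A' = finrank K A ∧
        IsCompl A B' ∧ IsCompl A' B' ∧ IsCompl A' B := by
  obtain ⟨B', hAB'⟩ := A.exists_isCompl
  have hB' : finrank K B' = finrank K B := by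
    have := finrank_add_eq_of_isCompl hAB'
    omega
  obtain ⟨A', hB'A', hBA'⟩ := exists_isCompl_isCompl_of_finrank_eq hB'
  have hA' : finrank K A' = finrank K A := by
    have := finrank_add_eq_of_isCompl hBA'
    omega
  exact ⟨B', hB', A', hA', hAB', hB'A'.symm, hBA'.symm⟩

def spanOfLinIndep {j : ℕ} (v : {v : Fin j → V // LinearIndependent K v}) :
    {W : Submodule K V // finrank K W = j} :=
  ⟨span K (Set.range v.1), by rw [finrank_span_eq_card v.2, Fintype.card_fin]⟩

noncomputable def spanOfLinIndepFiberEquiv [FiniteDimensional K V] {j : ℕ}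
    (W : {W : Submodule K V // finrank K W = j}) :
    {v // spanOfLinIndep v = W} ≃ {u : Fin j → W.1 // LinearIndependent K u} where
  toFun v :=
    ⟨fun i => ⟨v.1.1 i, congrArg Subtype.val v.2 ▸ subset_span (Set.mem_range_self i)⟩,
      LinearIndependent.of_comp W.1.subtype v.1.2⟩
  invFun u := ⟨⟨W.1.subtype ∘ u.1, u.2.map' W.1.subtype W.1.ker_subtype⟩, Subtype.ext <| by
    have hu : span K (Set.range u.1) = ⊤ :=
      eq_top_of_finrank_eq (by rw [finrank_span_eq_card u.2, Fintype.card_fin, W.2])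
    change span K (Set.range (W.1.subtype ∘ u.1)) = W.1
    rw [Set.range_comp, span_image, hu, map_subtype_top]⟩
  left_inv _ := rfl
  right_inv _ := rfl

theorem natCard_finrank_eq_mul [Fintype K] [Finite V] {j : ℕ} (hj : j ≤ finrank K V) :
    Nat.card {W : Submodule K V // finrank K W = j} *
        ∏ i : Fin j, (Fintype.card K ^ j - Fintype.card K ^ (i : ℕ)) =
      ∏ i : Fin j, (Fintype.card K ^ finrank K V - Fintype.card K ^ (i : ℕ)) := by
  have := Fintype.ofFinite {W : Submodule K V // finrank K W = j}
  rw [← card_linearIndependent hj, ← Nat.card_congr (Equiv.sigmaFiberEquiv spanOfLinIndep),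
    Nat.card_sigma, sum_congr rfl fun W _ => by
      rw [Nat.card_congr (spanOfLinIndepFiberEquiv W), card_linearIndependent W.2.ge, W.2],
    sum_const, card_univ, smul_eq_mul, Nat.card_eq_fintype_card]

theorem ncard_finrank_eq [Fintype K] [Finite V] {j : ℕ} (hj : j ≤ finrank K V) :
    {W : Submodule K V | finrank K W = j}.ncard = gauss (Fintype.card K) (finrank K V) j := by
  have hcount := congrArg (Nat.cast : ℕ → ℤ) (natCard_finrank_eq_mul (K := K) (V := V) hj)
  set q := Fintype.card K
  have hq : (1 : ℤ) < q := by exact_mod_cast Fintype.one_lt_card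
  have hcast : ∀ m, j ≤ m → ((∏ i : Fin j, (q ^ m - q ^ (i : ℕ)) : ℕ) : ℤ) =
      ∏ i ∈ range j, ((q : ℤ) ^ m - q ^ i) := fun m hm => by
    rw [Fin.prod_univ_eq_prod_range (fun i => q ^ m - q ^ i), Nat.cast_prod]
    refine prod_congr rfl fun i hi => ?_
    rw [Nat.cast_sub (Nat.pow_le_pow_right Fintype.card_pos ((mem_range.1 hi).le.trans hm))]
    push_cast
    rfl
  have hne : ∏ i ∈ range j, ((q : ℤ) ^ j - q ^ i) ≠ 0 :=
    prod_ne_zero_iff.2 fun i hi => sub_ne_zero.2 (pow_lt_pow_right₀ hq (mem_range.1 hi)).ne'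
  rw [Nat.cast_mul, hcast j le_rfl, hcast _ hj,
    ← gauss_mul_prod_range_pow_sub_pow q (finrank K V) j] at hcount
  rw [← Nat.card_coe_set_eq]
  exact_mod_cast mul_right_cancel₀ hne hcount

end Submodule

theorem sdelta_eq_finrank_of_isCompl {K V : Type*} [Field K] [AddCommGroup V] [Module K V]
    [FiniteDimensional K V] {A B : Submodule K V} (h : IsCompl A B) :
    sdelta K V A B = finrank K V := by
  rw [sdelta, Submodule.finrank_add_eq_of_isCompl h, h.inf_eq_bot, finrank_bot, mul_zero,
    Nat.sub_zero]

/-- in a family of subspaces of `F_q^n` of diameter at most `d`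
with `n ≥ d+1`, for every `0 ≤ k < n−k` one has
`|F(k)| + |F(n−k)| ≤ C_q(n,k)`, with equality iff one layer is empty and the
other consists of all subspaces of the corresponding dimension. -/
theorem complementary_layers_trivial_bound (q n d k : ℕ) (K : Type*) [Field K]
    [Fintype K] (hq : Fintype.card K = q) (hn : d + 1 ≤ n) (hk : k < n - k)
    (F : Set (Submodule K (Fin n → K)))
    (hdiam : ∀ A ∈ F, ∀ B ∈ F, sdelta K (Fin n → K) A B ≤ d) :
    {A ∈ F | finrank K ↥A = k}.ncard + {A ∈ F | finrank K ↥A = n - k}.ncard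
      ≤ gauss q n k ∧
    ({A ∈ F | finrank K ↥A = k}.ncard + {A ∈ F | finrank K ↥A = n - k}.ncard
        = gauss q n k ↔
      ({A ∈ F | finrank K ↥A = k} = {A : Submodule K (Fin n → K) | finrank K ↥A = k}
          ∧ {A ∈ F | finrank K ↥A = n - k} = ∅) ∨
      ({A ∈ F | finrank K ↥A = k} = ∅
          ∧ {A ∈ F | finrank K ↥A = n - k}
            = {A : Submodule K (Fin n → K) | finrank K ↥A = n - k})) := by
  have hV : finrank K (Fin n → K) = n := finrank_fin_fun K
  have hlayer : {A : Submodule K (Fin n → K) | finrank K A = k}.ncard = gauss q n k := by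
    rw [Submodule.ncard_finrank_eq (by omega), hV, hq]
  rw [← hlayer]
  refine Set.ncard_add_ncard_le_and_eq_iff_of_biregular (r := IsCompl)
    (pow_pos (Fintype.card_pos (α := K)) (k * (n - k))) ?_ ?_ ?_ (fun _ h => h.2) (fun _ h => h.2)
    fun A hA B hB hAB => ?_
  · intro A (hA : finrank K A = k)
    exact Submodule.ncard_finrank_eq_and_isCompl hA (by omega)
  · intro B (hB : finrank K B = n - k)
    rw [mul_comm, ← Submodule.ncard_finrank_eq_and_isCompl hB (by omega)]
    simp only [Set.mem_ofPred_eq, isCompl_comm]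
  · intro A (hA : finrank K A = k) B (hB : finrank K B = n - k)
    obtain ⟨B', hB', A', hA', h⟩ :=
      Submodule.exists_isCompl_isCompl_isCompl (A := A) (B := B) (by omega)
    exact ⟨B', hB'.trans hB, A', hA'.trans hA, h⟩
  · have hΔ := hdiam A hA.1 B hB.1
    rw [sdelta_eq_finrank_of_isCompl hAB, hV] at hΔ
    omega
end

section
/- Fix a prime power q, integers t ≥ 1 and n ≥ 2t+3, and a 1-dimensional subspace X of V = F_q^n. The family D_t(X) := {A ≤ V : dim A ≤ t} ∪ {A ≤ V : dim A = t+1 and X ≤ A} has diameter at most 2t+1 in the metric Δ, and its cardinality is Σ_{i=0}^{t} C_q(n,i) + C_q(n−1,t). -/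
open Module

open Submodule in
section
open Submodule

section
variable {K : Type*} [Field K] {V : Type*} [AddCommGroup V] [Module K V] [FiniteDimensional K V]

lemma finrank_map_mkQ_add_inf (p A : Submodule K V) :
    finrank K ↥(Submodule.map p.mkQ A) + finrank K ↥(p ⊓ A) = finrank K ↥A := by
  have hker : LinearMap.ker (p.mkQ.comp A.subtype) = comap A.subtype (p ⊓ A) := by
    rw [LinearMap.ker_comp, Submodule.ker_mkQ]
    ext x; simp [x.2]
  have hrange : LinearMap.range (p.mkQ.comp A.subtype) = Submodule.map p.mkQ A := by
    rw [LinearMap.range_comp, Submodule.range_subtype]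
  have h : finrank K ↥(LinearMap.range (p.mkQ.comp A.subtype)) + finrank K ↥(LinearMap.ker (p.mkQ.comp A.subtype)) = finrank K ↥A := LinearMap.finrank_range_add_finrank_ker _
  rwa [hrange, hker, (Submodule.comapSubtypeEquivOfLe (inf_le_right : p ⊓ A ≤ A)).finrank_eq] at h

lemma finrank_map_mkQ_of_le {p A : Submodule K V} (h : p ≤ A) :
    finrank K ↥(Submodule.map p.mkQ A) + finrank K ↥p = finrank K ↥A := by
  have := finrank_map_mkQ_add_inf p A
  rwa [inf_eq_left.mpr h] at this

set_option linter.unusedSectionVars false in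
lemma le_comap_mkQ' (p : Submodule K V) (B : Submodule K (V ⧸ p)) : p ≤ comap p.mkQ B := by
  intro x hx
  simp only [Submodule.mem_comap, Submodule.mkQ_apply]
  rw [(Submodule.Quotient.mk_eq_zero p).mpr hx]
  exact B.zero_mem


lemma dim1_cases {L : Submodule K V} (hL : finrank K ↥L = 1) (A : Submodule K V) :
    L ≤ A ∨ A ⊓ L = ⊥ := by
  by_cases h : L ≤ A
  · exact Or.inl h
  · right
    rcases lt_or_eq_of_le (inf_le_right : A ⊓ L ≤ L) with hlt | heq
    · have h2 := Submodule.finrank_lt_finrank_of_lt hlt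
      rw [hL] at h2
      have h0 : finrank K ↥(A ⊓ L) = 0 := by omega
      exact Submodule.finrank_eq_zero.mp h0
    · exact absurd (heq ▸ inf_le_left : L ≤ A) h

/-- The subspaces of dimension `k + dim p` containing `p` biject with `k`-dimensional
subspaces of `V ⧸ p`. -/
lemma card_subspaces_ge (p : Submodule K V) (k : ℕ) :
    Nat.card {A : Submodule K V | finrank K ↥A = k + finrank K ↥p ∧ p ≤ A}
      = Nat.card {B : Submodule K (V ⧸ p) | finrank K ↥B = k} := by
  apply Nat.card_congr
  refine ⟨fun A => ⟨Submodule.map p.mkQ A.1, ?_⟩, fun B => ⟨comap p.mkQ B.1, ?_, ?_⟩, ?_, ?_⟩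
  · obtain ⟨hA, hle⟩ := A.2
    have := finrank_map_mkQ_of_le hle
    simp only [Set.mem_setOf_eq]
    omega
  · have hle : p ≤ comap p.mkQ B.1 := le_comap_mkQ' p B.1
    have hmc : Submodule.map p.mkQ (comap p.mkQ B.1) = B.1 :=
      Submodule.map_comap_eq_self (by rw [Submodule.range_mkQ]; exact le_top)
    have := finrank_map_mkQ_of_le hle
    rw [hmc] at this
    have hB := B.2
    simp only [Set.mem_setOf_eq] at hB ⊢
    omega
  · exact le_comap_mkQ' p B.1
  · rintro ⟨A, hA, hle⟩
    ext1
    simp only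
    rw [Submodule.comap_map_eq, Submodule.ker_mkQ, sup_eq_left.mpr hle]
  · rintro ⟨B, hB⟩
    ext1
    simp only
    exact Submodule.map_comap_eq_self (by rw [Submodule.range_mkQ]; exact le_top)
variable [Fintype K]

/-- Complements of `p` biject with linear maps `V ⧸ p →ₗ[K] p`. -/
noncomputable def complEquivHom (p : Submodule K V) :
    { q : Submodule K V // IsCompl p q } ≃ ((V ⧸ p) →ₗ[K] ↥p) := by
  classical
  let q₀ := (Submodule.exists_isCompl p).choose
  have hq₀ : IsCompl p q₀ := (Submodule.exists_isCompl p).choose_spec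
  let f₀ : V →ₗ[K] ↥p := p.linearProjOfIsCompl q₀ hq₀
  have hf₀ : ∀ x : ↥p, f₀ ↑x = x := fun x => Submodule.linearProjOfIsCompl_apply_left hq₀ x
  refine p.isComplEquivProj.trans ?_
  refine ⟨fun f => p.liftQ (f.1 - f₀) ?_, fun g => ⟨f₀ + g ∘ₗ p.mkQ, ?_⟩, ?_, ?_⟩
  · intro x hx
    simp only [LinearMap.mem_ker, LinearMap.sub_apply]
    rw [f.2 ⟨x, hx⟩, hf₀ ⟨x, hx⟩, sub_self]
  · intro x
    simp only [LinearMap.add_apply, LinearMap.comp_apply, Submodule.mkQ_apply]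
    rw [hf₀ x, (Submodule.Quotient.mk_eq_zero p).mpr x.2, map_zero, add_zero]
  · rintro ⟨f, hf⟩
    ext x
    simp [Submodule.liftQ_apply]
  · intro g
    refine Submodule.linearMap_qext p ?_
    ext x
    simp [Submodule.liftQ_apply]

lemma card_isCompl (p : Submodule K V) :
    Nat.card { q : Submodule K V // IsCompl p q }
      = Fintype.card K ^ (finrank K (V ⧸ p) * finrank K ↥p) := by
  rw [Nat.card_congr (complEquivHom p)]
  haveI : Finite V := Module.finite_of_finite K
  haveI : Finite (V ⧸ p) := Quotient.finite _
  haveI : Finite ((V ⧸ p) →ₗ[K] ↥p) :=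
    Finite.of_injective (fun f => (f : (V ⧸ p) → ↥p)) DFunLike.coe_injective
  letI : Fintype ((V ⧸ p) →ₗ[K] ↥p) := Fintype.ofFinite _
  rw [Nat.card_eq_fintype_card, card_eq_pow_finrank (K := K), Module.finrank_linearMap]

/-- Relative complements of `p` inside `U` (where `p ≤ U`). -/
lemma card_relCompl {p U : Submodule K V} (h : p ≤ U) :
    Nat.card {A : Submodule K V // A ⊓ p = ⊥ ∧ A ⊔ p = U}
      = Fintype.card K ^ ((finrank K ↥U - finrank K ↥p) * finrank K ↥p) := by
  set p' : Submodule K ↥U := comap U.subtype p with hp'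
  have hmapp' : Submodule.map U.subtype p' = p := by
    rw [hp', Submodule.map_comap_subtype, inf_eq_right.mpr h]
  have hinj := Submodule.injective_subtype U
  have e : {A : Submodule K V // A ⊓ p = ⊥ ∧ A ⊔ p = U} ≃ { q : Submodule K ↥U // IsCompl p' q } := by
    refine ⟨fun A => ⟨comap U.subtype A.1, ?_⟩, fun B => ⟨Submodule.map U.subtype B.1, ?_, ?_⟩, ?_, ?_⟩
    · obtain ⟨hb, hs⟩ := A.2
      have hAle : A.1 ≤ U := le_sup_left.trans hs.le
      rw [isCompl_iff, disjoint_iff, codisjoint_iff]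
      constructor
      · rw [hp', ← Submodule.comap_inf]
        rw [inf_comm] at hb
        rw [hb]
        exact (Submodule.comap_bot _).trans (Submodule.ker_subtype U)
      · apply Submodule.map_injective_of_injective hinj
        rw [Submodule.map_sup, hmapp', Submodule.map_comap_subtype, inf_eq_right.mpr hAle,
          sup_comm, hs, Submodule.map_subtype_top]
    · have := B.2.disjoint
      rw [disjoint_iff] at this
      rw [← hmapp', ← Submodule.map_inf _ hinj, inf_comm, this, Submodule.map_bot]
    · have := B.2.codisjoint
      rw [codisjoint_iff] at this
      rw [← hmapp', ← Submodule.map_sup, sup_comm, this, Submodule.map_subtype_top]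
    · rintro ⟨A, hb, hs⟩
      have hAle : A ≤ U := le_sup_left.trans hs.le
      ext1
      simp only
      rw [Submodule.map_comap_subtype, inf_eq_right.mpr hAle]
    · rintro ⟨B, hB⟩
      ext1
      simp only
      exact Submodule.comap_map_eq_of_injective hinj B
  rw [Nat.card_congr e, card_isCompl p']
  have h1 : finrank K ↥p' = finrank K ↥p :=
    (Submodule.comapSubtypeEquivOfLe h).finrank_eq
  have h2 : finrank K (↥U ⧸ p') + finrank K ↥p' = finrank K ↥U :=
    Submodule.finrank_quotient_add_finrank p'
  rw [h1]
  congr 2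
  omega

end


lemma gauss_zero (q n : ℕ) : gauss q n 0 = 1 := by cases n <;> rfl

lemma gauss_succ (q n k : ℕ) :
    gauss q (n + 1) (k + 1) = gauss q n k + q ^ (k + 1) * gauss q n (k + 1) := rfl

section
variable {K : Type*} [Field K] [Fintype K] {V : Type*} [AddCommGroup V] [Module K V]
  [FiniteDimensional K V]

lemma card_rank_zero : Nat.card {A : Submodule K V | finrank K ↥A = 0} = 1 := by
  have h : {A : Submodule K V | finrank K ↥A = 0} = {⊥} := by
    ext A
    simp [Set.mem_setOf_eq, Submodule.finrank_eq_zero]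
  rw [h, Nat.card_coe_set_eq, Set.ncard_singleton]

lemma card_fiber {L : Submodule K V} (hL : finrank K ↥L = 1) (k : ℕ)
    (W : Submodule K (V ⧸ L)) (hW : finrank K ↥W = k + 1) :
    Nat.card {A : Submodule K V // finrank K ↥A = k + 1 ∧ ¬ L ≤ A ∧ Submodule.map L.mkQ A = W}
      = Fintype.card K ^ (k + 1) := by
  set U : Submodule K V := comap L.mkQ W with hU
  have hLU : L ≤ U := le_comap_mkQ' L W
  have hmapU : Submodule.map L.mkQ U = W :=
    Submodule.map_comap_eq_self (by rw [Submodule.range_mkQ]; exact le_top)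
  have hrU : finrank K ↥U = k + 2 := by
    have := finrank_map_mkQ_of_le hLU
    rw [hmapU, hW, hL] at this
    omega
  have hmapL : Submodule.map L.mkQ L = ⊥ :=
    le_bot_iff.mp (Submodule.map_le_iff_le_comap.mpr
      (by rw [Submodule.comap_bot, Submodule.ker_mkQ]))
  have e : {A : Submodule K V // finrank K ↥A = k + 1 ∧ ¬ L ≤ A ∧ Submodule.map L.mkQ A = W}
      ≃ {A : Submodule K V // A ⊓ L = ⊥ ∧ A ⊔ L = U} := by
    refine ⟨fun A => ⟨A.1, ?_, ?_⟩, fun B => ⟨B.1, ?_, ?_, ?_⟩, fun _ => rfl, fun _ => rfl⟩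
    · rcases dim1_cases hL A.1 with h | h
      · exact absurd h A.2.2.1
      · exact h
    · have hb : A.1 ⊓ L = ⊥ := by
        rcases dim1_cases hL A.1 with h | h
        · exact absurd h A.2.2.1
        · exact h
      have h1 : Submodule.map L.mkQ (A.1 ⊔ L) = W := by
        rw [Submodule.map_sup, hmapL, sup_bot_eq, A.2.2.2]
      have h2 : comap L.mkQ (Submodule.map L.mkQ (A.1 ⊔ L)) = A.1 ⊔ L := by
        rw [Submodule.comap_map_eq, Submodule.ker_mkQ, sup_assoc, sup_idem]
      rw [← h2, h1]
    · -- finrank B = k+1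
      have := finrank_map_mkQ_add_inf L B.1
      have hmapB : Submodule.map L.mkQ B.1 = W := by
        have h1 : Submodule.map L.mkQ (B.1 ⊔ L) = Submodule.map L.mkQ B.1 := by
          rw [Submodule.map_sup, hmapL, sup_bot_eq]
        rw [← h1, B.2.2, hmapU]
      rw [hmapB, hW, inf_comm, B.2.1] at this
      simpa using this.symm
    · intro hle
      have : L = ⊥ := le_bot_iff.mp (B.2.1 ▸ le_inf hle le_rfl)
      rw [this, finrank_bot] at hL
      omega
    · have h1 : Submodule.map L.mkQ (B.1 ⊔ L) = Submodule.map L.mkQ B.1 := by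
        rw [Submodule.map_sup, hmapL, sup_bot_eq]
      rw [← h1, B.2.2, hmapU]
  rw [Nat.card_congr e, card_relCompl hLU, hrU, hL]
  norm_num

lemma card_subspaces_eq_gauss' :
    ∀ (n : ℕ) (V : Type u) [AddCommGroup V] [Module K V] [FiniteDimensional K V],
      finrank K V = n → ∀ k : ℕ,
        Nat.card {A : Submodule K V | finrank K ↥A = k} = gauss (Fintype.card K) n k := by
  intro n
  induction n with
  | zero =>
    intro V _ _ _ hV k
    cases k with
    | zero => rw [card_rank_zero, gauss_zero]
    | succ k =>
      have hempty : {A : Submodule K V | finrank K ↥A = k + 1} = ∅ := by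
        ext A
        simp only [Set.mem_setOf_eq, Set.mem_empty_iff_false, iff_false]
        have := Submodule.finrank_le A
        omega
      rw [hempty]
      simp [gauss]
  | succ n ih =>
    intro V _ _ _ hV k
    classical
    haveI : Finite V := Module.finite_of_finite K
    haveI : Finite (Submodule K V) := Finite.of_injective _ SetLike.coe_injective
    cases k with
    | zero => rw [card_rank_zero, gauss_zero]
    | succ k =>
      have hnt : Nontrivial V := (Module.finrank_pos_iff (R := K) (M := V)).mp (by omega)
      obtain ⟨v, hv⟩ := exists_ne (0 : V)
      set L : Submodule K V := K ∙ v with hLdef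
      have hL : finrank K ↥L = 1 := finrank_span_singleton hv
      have hQ : finrank K (V ⧸ L) = n := by
        have := Submodule.finrank_quotient_add_finrank L
        rw [hL, hV] at this
        omega
      haveI : Finite (V ⧸ L) := Quotient.finite _
      haveI : Finite (Submodule K (V ⧸ L)) := Finite.of_injective _ SetLike.coe_injective
      -- split into A ⊇ L and A ⊉ L
      have hsplit : Nat.card {A : Submodule K V | finrank K ↥A = k + 1}
          = Nat.card {A : Submodule K V | finrank K ↥A = k + 1 ∧ L ≤ A}
            + Nat.card {A : Submodule K V | finrank K ↥A = k + 1 ∧ ¬ L ≤ A} := by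
        have hu : {A : Submodule K V | finrank K ↥A = k + 1}
            = {A : Submodule K V | finrank K ↥A = k + 1 ∧ L ≤ A}
              ∪ {A : Submodule K V | finrank K ↥A = k + 1 ∧ ¬ L ≤ A} := by
          ext A
          by_cases h : L ≤ A <;> simp [h]
        have hd : Disjoint {A : Submodule K V | finrank K ↥A = k + 1 ∧ L ≤ A}
            {A : Submodule K V | finrank K ↥A = k + 1 ∧ ¬ L ≤ A} := by
          rw [Set.disjoint_left]
          rintro A ⟨_, h1⟩ ⟨_, h2⟩
          exact h2 h1
        rw [Nat.card_coe_set_eq, Nat.card_coe_set_eq, Nat.card_coe_set_eq, hu,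
          Set.ncard_union_eq hd (Set.toFinite _) (Set.toFinite _)]
      -- first part
      have h1 : Nat.card {A : Submodule K V | finrank K ↥A = k + 1 ∧ L ≤ A}
          = gauss (Fintype.card K) n k := by
        have heq : {A : Submodule K V | finrank K ↥A = k + 1 ∧ L ≤ A}
            = {A : Submodule K V | finrank K ↥A = k + finrank K ↥L ∧ L ≤ A} := by
          rw [hL]
        rw [heq, card_subspaces_ge L k]
        exact ih (V ⧸ L) hQ k
      -- second part
      have h2 : Nat.card {A : Submodule K V | finrank K ↥A = k + 1 ∧ ¬ L ≤ A}
          = Fintype.card K ^ (k + 1) * gauss (Fintype.card K) n (k + 1) := by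
        set T : Set (Submodule K (V ⧸ L)) := {W | finrank K ↥W = k + 1} with hT
        set S : Set (Submodule K V) := {A | finrank K ↥A = k + 1 ∧ ¬ L ≤ A} with hS
        have hΦrank : ∀ A : ↥S, finrank K ↥(Submodule.map L.mkQ A.1) = k + 1 := by
          rintro ⟨A, hA1, hA2⟩
          have hb : A ⊓ L = ⊥ := by
            rcases dim1_cases hL A with h | h
            · exact absurd h hA2
            · exact h
          have hh := finrank_map_mkQ_add_inf L A
          rw [inf_comm, hb] at hh
          simp only [finrank_bot] at hh
          show finrank K ↥(Submodule.map L.mkQ A) = k + 1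
          omega
        let Φ : ↥S → ↥T := fun A => ⟨Submodule.map L.mkQ A.1, hΦrank A⟩
        have efib : ∀ W : ↥T, {A : ↥S // Φ A = W}
            ≃ {A : Submodule K V // finrank K ↥A = k + 1 ∧ ¬ L ≤ A ∧ Submodule.map L.mkQ A = W.1} := by
          intro W
          refine ⟨fun A => ⟨A.1.1, A.1.2.1, A.1.2.2, ?_⟩,
            fun A => ⟨⟨A.1, A.2.1, A.2.2.1⟩, ?_⟩, fun _ => rfl, fun _ => rfl⟩
          · exact congrArg Subtype.val A.2
          · exact Subtype.ext A.2.2.2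
        letI : Fintype ↥T := Fintype.ofFinite _
        letI : Fintype ↥S := Fintype.ofFinite _
        letI : ∀ W : ↥T, Fintype {A : ↥S // Φ A = W} := fun W => Fintype.ofFinite _
        have e : ↥S ≃ Σ W : ↥T, {A : ↥S // Φ A = W} := (Equiv.sigmaFiberEquiv Φ).symm
        rw [Nat.card_congr e, Nat.card_eq_fintype_card, Fintype.card_sigma]
        have hconst : ∀ W : ↥T, Fintype.card {A : ↥S // Φ A = W} = Fintype.card K ^ (k + 1) := by
          intro W
          rw [← Nat.card_eq_fintype_card, Nat.card_congr (efib W)]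
          exact card_fiber hL k W.1 W.2
        rw [Finset.sum_congr rfl (fun W _ => hconst W), Finset.sum_const, Finset.card_univ,
          smul_eq_mul, ← Nat.card_eq_fintype_card]
        rw [ih (V ⧸ L) hQ (k + 1)]
        ring
      rw [hsplit, h1, h2, gauss_succ]
end

section
variable {K : Type*} [Field K] [Fintype K] {V : Type*} [AddCommGroup V] [Module K V]
  [FiniteDimensional K V]

lemma card_le_eq_sum (t : ℕ) :
    Nat.card {A : Submodule K V | finrank K ↥A ≤ t}
      = ∑ i ∈ Finset.range (t + 1), Nat.card {A : Submodule K V | finrank K ↥A = i} := by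
  classical
  haveI : Finite V := Module.finite_of_finite K
  haveI : Finite (Submodule K V) := Finite.of_injective _ SetLike.coe_injective
  induction t with
  | zero =>
    rw [Finset.range_one, Finset.sum_singleton]
    have h0 : {A : Submodule K V | finrank K ↥A ≤ 0} = {A : Submodule K V | finrank K ↥A = 0} := by
      ext A
      exact Nat.le_zero
    rw [h0]
  | succ t ih =>
    rw [Finset.sum_range_succ, ← ih]
    have hu : {A : Submodule K V | finrank K ↥A ≤ t + 1}
        = {A : Submodule K V | finrank K ↥A ≤ t} ∪ {A : Submodule K V | finrank K ↥A = t + 1} := by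
      ext A
      simp only [Set.mem_setOf_eq, Set.mem_union]
      omega
    have hd : Disjoint {A : Submodule K V | finrank K ↥A ≤ t}
        {A : Submodule K V | finrank K ↥A = t + 1} := by
      rw [Set.disjoint_left]
      rintro A h1 h2
      simp only [Set.mem_setOf_eq] at h1 h2
      omega
    rw [Nat.card_coe_set_eq, Nat.card_coe_set_eq, Nat.card_coe_set_eq, hu,
      Set.ncard_union_eq hd (Set.toFinite _) (Set.toFinite _)]
end



end

/-- for `t ≥ 1`, `n ≥ 2t+3` and a `1`-dimensional `X ≤ F_q^n`,
the canonical double ball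
`D_t(X) = {A : dim A ≤ t} ∪ {A : dim A = t+1, X ≤ A}` has diameter at most
`2t+1`, and its cardinality is `Σ_{i=0}^{t} C_q(n,i) + C_q(n−1,t)`. -/
theorem double_ball_diameter_card (q n t : ℕ) (K : Type*) [Field K] [Fintype K]
    (hq : Fintype.card K = q) (ht : 1 ≤ t) (hn : 2 * t + 3 ≤ n)
    (X : Submodule K (Fin n → K)) (hX : finrank K ↥X = 1) :
    (∀ A ∈ {A : Submodule K (Fin n → K) | finrank K ↥A ≤ t}
        ∪ {A | finrank K ↥A = t + 1 ∧ X ≤ A},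
      ∀ B ∈ {A : Submodule K (Fin n → K) | finrank K ↥A ≤ t}
        ∪ {A | finrank K ↥A = t + 1 ∧ X ≤ A},
        sdelta K (Fin n → K) A B ≤ 2 * t + 1) ∧
    ({A : Submodule K (Fin n → K) | finrank K ↥A ≤ t}
        ∪ {A | finrank K ↥A = t + 1 ∧ X ≤ A}).ncard
      = (∑ i ∈ Finset.range (t + 1), gauss q n i) + gauss q (n - 1) t := by
  have hV : finrank K (Fin n → K) = n := by simp
  constructor
  · intro A hA B hB
    unfold sdelta
    rcases hA with hA | hA <;> rcases hB with hB | hB <;>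
      simp only [Set.mem_setOf_eq] at hA hB
    · omega
    · obtain ⟨hB1, -⟩ := hB
      omega
    · obtain ⟨hA1, -⟩ := hA
      omega
    · obtain ⟨hA1, hA2⟩ := hA
      obtain ⟨hB1, hB2⟩ := hB
      have hX' : X ≤ A ⊓ B := le_inf hA2 hB2
      have h1 : 1 ≤ finrank K ↥(A ⊓ B) := hX ▸ Submodule.finrank_mono hX'
      omega
  · classical
    have hd : Disjoint {A : Submodule K (Fin n → K) | finrank K ↥A ≤ t}
        {A : Submodule K (Fin n → K) | finrank K ↥A = t + 1 ∧ X ≤ A} := by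
      rw [Set.disjoint_left]
      rintro A h1 ⟨h2, -⟩
      simp only [Set.mem_setOf_eq] at h1
      omega
    haveI : Finite (Submodule K (Fin n → K)) := Finite.of_injective _ SetLike.coe_injective
    rw [Set.ncard_union_eq hd (Set.toFinite _) (Set.toFinite _)]
    congr 1
    · rw [← Nat.card_coe_set_eq, card_le_eq_sum t]
      refine Finset.sum_congr rfl fun i _ => ?_
      rw [card_subspaces_eq_gauss' n (Fin n → K) hV i, hq]
    · rw [← Nat.card_coe_set_eq]
      have heq : {A : Submodule K (Fin n → K) | finrank K ↥A = t + 1 ∧ X ≤ A}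
          = {A : Submodule K (Fin n → K) | finrank K ↥A = t + finrank K ↥X ∧ X ≤ A} := by
        rw [hX]
      rw [heq, card_subspaces_ge X t]
      have hq' : finrank K ((Fin n → K) ⧸ X) = n - 1 := by
        have := Submodule.finrank_quotient_add_finrank X
        rw [hX, hV] at this
        omega
      rw [card_subspaces_eq_gauss' (n - 1) ((Fin n → K) ⧸ X) hq' t, hq]
end

section
/- For a prime power q and integers t ≥ 1, n ≥ 2t+1: Σ_{k=t+1}^{⌊n/2⌋} C_q(n−k+t, t) / C_q(n,t) < 1/(q^t − 1). In other words, the tail sum of ratios of Gaussian binomial coefficients is bounded by the geometric series bound 1/(q^t−1). -/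
open Finset

section GeomSum

variable {K : Type*} [Field K] [LinearOrder K] [IsStrictOrderedRing K] {x : K}

theorem geom_sum_lt_inv_one_sub (h0 : 0 < x) (h1 : x < 1) (n : ℕ) :
    ∑ i ∈ range n, x ^ i < (1 - x)⁻¹ := by
  rw [geom_sum_eq h1.ne, ← neg_div_neg_eq, neg_sub, neg_sub, div_eq_mul_inv]
  have : 0 < (1 - x)⁻¹ := inv_pos.2 (sub_pos.2 h1)
  have : 0 < x ^ n := pow_pos h0 n
  nlinarith

theorem sum_Icc_pow_sub_lt (h0 : 0 < x) (h1 : x < 1) (t M : ℕ) :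
    ∑ k ∈ Icc (t + 1) M, x ^ (k - t) < x / (1 - x) :=
  calc ∑ k ∈ Icc (t + 1) M, x ^ (k - t) = x * ∑ j ∈ range (M - t), x ^ j := by
        rw [← Ico_add_one_right_eq_Icc, sum_Ico_eq_sum_range, mul_sum]
        refine sum_congr (by congr 1; omega) fun j _ => ?_
        rw [← pow_succ', show t + 1 + j - t = j + 1 by omega]
    _ < x * (1 - x)⁻¹ := mul_lt_mul_of_pos_left (geom_sum_lt_inv_one_sub h0 h1 _) h0
    _ = x / (1 - x) := (div_eq_mul_inv x _).symm

end GeomSum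

theorem pow_mul_gauss_le_gauss_succ (q m t : ℕ) : q ^ t * gauss q m t ≤ gauss q (m + 1) t := by
  cases t with
  | zero => simp [gauss]
  | succ t => exact Nat.le_add_left _ _

theorem pow_mul_gauss_le_gauss_add (q m t : ℕ) :
    ∀ d, q ^ (t * d) * gauss q m t ≤ gauss q (m + d) t
  | 0 => by simp
  | d + 1 =>
    calc q ^ (t * (d + 1)) * gauss q m t = q ^ t * (q ^ (t * d) * gauss q m t) := by ring
      _ ≤ q ^ t * gauss q (m + d) t := Nat.mul_le_mul_left _ (pow_mul_gauss_le_gauss_add q m t d)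
      _ ≤ gauss q (m + (d + 1)) t := pow_mul_gauss_le_gauss_succ q (m + d) t

theorem gauss_div_gauss_add_le {q : ℕ} (hq : 0 < q) (m d t : ℕ) :
    (gauss q m t : ℚ) / gauss q (m + d) t ≤ ((q : ℚ) ^ t)⁻¹ ^ d := by
  have hqd : (0 : ℚ) < (q : ℚ) ^ (t * d) := by positivity
  refine div_le_of_le_mul₀ (by positivity) (by positivity) ?_
  rw [inv_pow, ← pow_mul, inv_mul_eq_div, le_div_iff₀' hqd]
  exact_mod_cast pow_mul_gauss_le_gauss_add q m t d

theorem tail_sum_bound_general (q t n : ℕ) (hq : IsPrimePow q) (ht : 1 ≤ t) :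
    ∑ k ∈ Finset.Icc (t + 1) (n / 2),
        (gauss q (n - k + t) t : ℚ) / (gauss q n t : ℚ)
      < 1 / ((q : ℚ) ^ t - 1) := by
  have hqt : (1 : ℚ) < (q : ℚ) ^ t := one_lt_pow₀ (by exact_mod_cast hq.two_le) (by omega)
  set x : ℚ := ((q : ℚ) ^ t)⁻¹
  have hratio : ∀ k ∈ Icc (t + 1) (n / 2),
      (gauss q (n - k + t) t : ℚ) / gauss q n t ≤ x ^ (k - t) := by
    intro k hk
    have hkn : n - k + t + (k - t) = n := by grind
    simpa only [hkn] using gauss_div_gauss_add_le hq.pos (n - k + t) (k - t) t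
  calc _ ≤ ∑ k ∈ Icc (t + 1) (n / 2), x ^ (k - t) := sum_le_sum hratio
    _ < x / (1 - x) := sum_Icc_pow_sub_lt (by positivity) (inv_lt_one_of_one_lt₀ hqt) _ _
    _ = 1 / ((q : ℚ) ^ t - 1) := by
      have : (q : ℚ) ^ t - 1 ≠ 0 := (sub_pos.2 hqt).ne'
      simp only [x]
      field_simp

/-- for a prime power `q`, `t ≥ 1` and `n ≥ 2t+1`,
`Σ_{k=t+1}^{⌊n/2⌋} C_q(n−k+t,t)/C_q(n,t) < 1/(q^t − 1)`. -/
theorem tail_sum_bound (q t n : ℕ) (hq : IsPrimePow q) (ht : 1 ≤ t)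
    (hn : 2 * t + 1 ≤ n) :
    ∑ k ∈ Finset.Icc (t + 1) (n / 2),
        (gauss q (n - k + t) t : ℚ) / (gauss q n t : ℚ)
      < 1 / ((q : ℚ) ^ t - 1) :=
  tail_sum_bound_general q t n hq ht
end

section
/- Let V = F_q^n with n ≥ 3, and let F be a family of subspaces with diam(F) ≤ d where n ≥ d+1. If F(1) and F(n−1) both have at least 2 elements each, then every member of F(1) is contained in every member of F(n−1), and consequently |F(1)| + |F(n−1)| ≤ 2·C_q(n−2,1) < C_q(n,1) − q^{n−1}. -/
open Module

/-!
A line `X` and a hyperplane `Y` of `F_q^n` with `X ⊄ Y` are at distance `n > d`, so every line of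
`F` lies in every hyperplane of `F`. Hence the lines of `F` lie in the intersection of two distinct
hyperplanes of `F`, a space of dimension `n - 2`, which has `C_q(n-2,1)` lines; dually, the
annihilators of the hyperplanes of `F` are lines in the annihilators of two distinct lines of `F`.
The last inequality is `2 C_q(n-2,1) < 1 + q C_q(n-2,1) = C_q(n-1,1) = C_q(n,1) - q^(n-1)`.
-/

lemma gauss_succ_one (q m : ℕ) : gauss q (m + 1) 1 = 1 + q * gauss q m 1 := by
  simp [gauss]

lemma gauss_one_eq_sum_range (q m : ℕ) : gauss q m 1 = ∑ i ∈ Finset.range m, q ^ i := by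
  induction m with
  | zero => rfl
  | succ m ih =>
    rw [gauss_succ_one, ih, Finset.sum_range_succ', Finset.mul_sum, add_comm]
    simp [pow_succ']

lemma two_mul_gauss_one_lt_sub_pow {q n : ℕ} (hq : 2 ≤ q) (hn : 2 ≤ n) :
    (2 * gauss q (n - 2) 1 : ℤ) < gauss q n 1 - q ^ (n - 1) := by
  obtain ⟨m, rfl⟩ := Nat.exists_eq_add_of_le' hn
  have htop : gauss q (m + 2) 1 = gauss q (m + 1) 1 + q ^ (m + 1) := by
    simp only [gauss_one_eq_sum_range, Finset.sum_range_succ _ (m + 1)]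
  rw [Nat.add_sub_cancel, show m + 2 - 1 = m + 1 by omega, htop, gauss_succ_one]
  push_cast
  nlinarith

section Subspaces

variable {K V : Type*} [Field K] [AddCommGroup V] [Module K V]

lemma le_of_sdelta_le_finrank {X Y : Submodule K V} (hX : finrank K X = 1)
    (h : sdelta K V X Y ≤ finrank K Y) : X ≤ Y := by
  have : FiniteDimensional K X := Module.finite_of_finrank_eq_succ hX
  have hinf_le : finrank K ↥(X ⊓ Y) ≤ 1 := hX ▸ Submodule.finrank_mono inf_le_left
  have hinf : finrank K ↥(X ⊓ Y) = 1 := by unfold sdelta at h; omega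
  exact inf_eq_left.1 (Submodule.eq_of_le_of_finrank_eq inf_le_left (hinf.trans hX.symm))

variable [FiniteDimensional K V]

lemma finrank_inf_of_finrank_eq_sub_one {Y₁ Y₂ : Submodule K V} (hne : Y₁ ≠ Y₂)
    (h₁ : finrank K Y₁ = finrank K V - 1) (h₂ : finrank K Y₂ = finrank K V - 1) :
    finrank K ↥(Y₁ ⊓ Y₂) = finrank K V - 2 := by
  have hlt : Y₁ < Y₁ ⊔ Y₂ := lt_of_le_of_ne le_sup_left fun h ↦
    hne (Submodule.eq_of_le_of_finrank_eq (sup_eq_left.1 h.symm) (h₂.trans h₁.symm)).symm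
  have := Submodule.finrank_lt_finrank_of_lt hlt
  have := Submodule.finrank_le (Y₁ ⊔ Y₂)
  have := Submodule.finrank_sup_add_finrank_inf_eq Y₁ Y₂
  omega

lemma ncard_le_gauss_of_finrank_eq_one_of_le [Finite K] (W : Submodule K V)
    {S : Set (Submodule K V)} (hS : ∀ X ∈ S, finrank K X = 1 ∧ X ≤ W) :
    S.ncard ≤ gauss (Nat.card K) (finrank K W) 1 := by
  have : Finite V := Module.finite_of_finite K
  have hsub : S ⊆ Set.range fun x : Projectivization K W ↦ x.submodule.map W.subtype := by
    intro X hX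
    obtain ⟨hX₁, hXW⟩ := hS X hX
    have hline : finrank K ↥(X.comap W.subtype) = 1 :=
      (Submodule.comapSubtypeEquivOfLe hXW).finrank_eq.trans hX₁
    refine ⟨Projectivization.mk'' _ hline, ?_⟩
    dsimp only
    rw [Projectivization.submodule_mk'', Submodule.map_comap_subtype, inf_eq_right.2 hXW]
  calc S.ncard ≤ (Set.range fun x : Projectivization K W ↦ x.submodule.map W.subtype).ncard :=
        Set.ncard_le_ncard hsub
    _ ≤ Nat.card (Projectivization K W) := by
        rw [← Set.image_univ, ← Set.ncard_univ]; exact Set.ncard_image_le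
    _ = gauss (Nat.card K) (finrank K W) 1 := by
        rw [Projectivization.card_of_finrank K W rfl, gauss_one_eq_sum_range]

lemma ncard_lines_le_gauss [Finite K] {Y₁ Y₂ : Submodule K V} (hne : Y₁ ≠ Y₂)
    (h₁ : finrank K Y₁ = finrank K V - 1) (h₂ : finrank K Y₂ = finrank K V - 1)
    {S : Set (Submodule K V)} (hS : ∀ X ∈ S, finrank K X = 1 ∧ X ≤ Y₁ ∧ X ≤ Y₂) :
    S.ncard ≤ gauss (Nat.card K) (finrank K V - 2) 1 := by
  rw [← finrank_inf_of_finrank_eq_sub_one hne h₁ h₂]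
  refine ncard_le_gauss_of_finrank_eq_one_of_le _ fun X hX ↦ ?_
  obtain ⟨hX₁, hXY₁, hXY₂⟩ := hS X hX
  exact ⟨hX₁, le_inf hXY₁ hXY₂⟩

lemma finrank_dualAnnihilator (W : Submodule K V) :
    finrank K W.dualAnnihilator = finrank K V - finrank K W := by
  have := Subspace.finrank_add_finrank_dualAnnihilator_eq W
  omega

lemma ncard_hyperplanes_le_gauss [Finite K] {X₁ X₂ : Submodule K V} (hne : X₁ ≠ X₂)
    (h₁ : finrank K X₁ = 1) (h₂ : finrank K X₂ = 1)
    {S : Set (Submodule K V)}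
    (hS : ∀ Y ∈ S, finrank K Y = finrank K V - 1 ∧ X₁ ≤ Y ∧ X₂ ≤ Y) :
    S.ncard ≤ gauss (Nat.card K) (finrank K V - 2) 1 := by
  have hV : 1 ≤ finrank K V := h₁ ▸ Submodule.finrank_le X₁
  have hinj : Function.Injective (Submodule.dualAnnihilator : Submodule K V → _) :=
    fun _ _ h ↦ Subspace.dualAnnihilator_inj.1 h
  rw [← Set.ncard_image_of_injective S hinj, ← Subspace.dual_finrank_eq]
  refine ncard_lines_le_gauss (hinj.ne hne) ?_ ?_ ?_
  · rw [finrank_dualAnnihilator, h₁, Subspace.dual_finrank_eq]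
  · rw [finrank_dualAnnihilator, h₂, Subspace.dual_finrank_eq]
  · rintro _ ⟨Y, hY, rfl⟩
    obtain ⟨hY₁, hXY₁, hXY₂⟩ := hS Y hY
    refine ⟨?_, Submodule.dualAnnihilator_anti hXY₁, Submodule.dualAnnihilator_anti hXY₂⟩
    rw [finrank_dualAnnihilator, hY₁]
    omega

end Subspaces

/-- if `F` is a family of subspaces of `F_q^n` (`n ≥ 3`,
`n ≥ d+1`) with diameter at most `d`, and the layers `F(1)` and `F(n−1)` each
have at least two elements, then every member of `F(1)` is contained in every
member of `F(n−1)`, and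
`|F(1)| + |F(n−1)| ≤ 2·C_q(n−2,1) < C_q(n,1) − q^{n−1}`. -/
theorem extreme_layers_bound (q n d : ℕ) (K : Type*) [Field K] [Fintype K]
    (hq : Fintype.card K = q) (hn3 : 3 ≤ n) (hnd : d + 1 ≤ n)
    (F : Set (Submodule K (Fin n → K)))
    (hdiam : ∀ A ∈ F, ∀ B ∈ F, sdelta K (Fin n → K) A B ≤ d)
    (h1 : 2 ≤ {A ∈ F | finrank K ↥A = 1}.ncard)
    (h2 : 2 ≤ {A ∈ F | finrank K ↥A = n - 1}.ncard) :
    (∀ X ∈ F, finrank K ↥X = 1 → ∀ Y ∈ F, finrank K ↥Y = n - 1 → X ≤ Y) ∧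
    {A ∈ F | finrank K ↥A = 1}.ncard + {A ∈ F | finrank K ↥A = n - 1}.ncard
      ≤ 2 * gauss q (n - 2) 1 ∧
    ((2 * gauss q (n - 2) 1 : ℤ) < (gauss q n 1 : ℤ) - q ^ (n - 1)) := by
  have hV : finrank K (Fin n → K) = n := Module.finrank_fin_fun K
  have hK : Nat.card K = q := Nat.card_eq_fintype_card.trans hq
  have incidence : ∀ X ∈ F, finrank K ↥X = 1 → ∀ Y ∈ F, finrank K ↥Y = n - 1 → X ≤ Y :=
    fun X hX hX₁ Y hY hY₁ ↦ le_of_sdelta_le_finrank hX₁ (by have := hdiam X hX Y hY; omega)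
  obtain ⟨X₁, hX₁, X₂, hX₂, hXne⟩ := (Set.one_lt_ncard (Set.toFinite _)).1 h1
  obtain ⟨Y₁, hY₁, Y₂, hY₂, hYne⟩ := (Set.one_lt_ncard (Set.toFinite _)).1 h2
  have hlines := ncard_lines_le_gauss (S := {A ∈ F | finrank K ↥A = 1}) hYne
    (by rw [hV]; exact hY₁.2) (by rw [hV]; exact hY₂.2) fun X hX ↦
      ⟨hX.2, incidence X hX.1 hX.2 Y₁ hY₁.1 hY₁.2, incidence X hX.1 hX.2 Y₂ hY₂.1 hY₂.2⟩
  have hhyperplanes := ncard_hyperplanes_le_gauss (S := {A ∈ F | finrank K ↥A = n - 1}) hXne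
    hX₁.2 hX₂.2 fun Y hY ↦ ⟨by rw [hV]; exact hY.2,
      incidence X₁ hX₁.1 hX₁.2 Y hY.1 hY.2, incidence X₂ hX₂.1 hX₂.2 Y hY.1 hY.2⟩
  rw [hV, hK] at hlines hhyperplanes
  refine ⟨incidence, by omega, two_mul_gauss_one_lt_sub_pow ?_ (by omega)⟩
  exact hq ▸ Fintype.one_lt_card
end

section
/- Let V = F_q^n, d = 2t, and suppose F is a family of subspaces with diam(F) ≤ d, n ≥ d+2, F(0) ≠ ∅, and |F(k)| + |F(n−k)| = C_q(n,k) for every k = 0,1,…,t. Then F(k) consists of all k-dimensional subspaces and F(n−k) = ∅ for every k = 0,1,…,t. -/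
open Module

open Finset in
lemma gauss_prod_shift (q : ℤ) (m k : ℕ) :
    ∏ i ∈ range (k+1), (q^(m+1) - q^i)
      = (q^(m+1) - 1) * q^k * ∏ i ∈ range k, (q^m - q^i) := by
  rw [Finset.prod_range_succ']
  have h : ∀ i ∈ range k, q^(m+1) - q^(i+1) = q * (q^m - q^i) := by
    intro i _; ring
  rw [Finset.prod_congr rfl h, Finset.prod_mul_distrib, Finset.prod_const,
    Finset.card_range]
  ring

open Finset in
lemma gauss_id (q : ℕ) : ∀ n k : ℕ,
    (gauss q n k : ℤ) * ∏ i ∈ range k, ((q:ℤ)^k - (q:ℤ)^i)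
      = ∏ i ∈ range k, ((q:ℤ)^n - (q:ℤ)^i) := by
  intro n
  induction n with
  | zero =>
    intro k
    cases k with
    | zero => simp [gauss]
    | succ k =>
      rw [show gauss q 0 (k+1) = 0 from rfl]
      rw [(Finset.prod_eq_zero (Finset.mem_range.2 (Nat.succ_pos k))
        (by simp) : ∏ i ∈ range (k+1), ((q:ℤ)^0 - (q:ℤ)^i) = 0)]
      simp
  | succ n ih =>
    intro k
    cases k with
    | zero => simp [gauss]
    | succ k =>
      rw [show gauss q (n+1) (k+1) = gauss q n k + q ^ (k + 1) * gauss q n (k + 1) from rfl]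
      have h1 := ih k
      have h2 := ih (k+1)
      rw [gauss_prod_shift (q:ℤ) k k] at h2 ⊢
      rw [gauss_prod_shift (q:ℤ) n k]
      rw [Finset.prod_range_succ] at h2
      push_cast
      linear_combination ((q:ℤ)^(k+1)-1) * (q:ℤ)^k * h1 + (q:ℤ)^(k+1) * h2

section Counting

open Finset

variable {K : Type*} [Field K] [Fintype K]

instance gaussSubFinite (n : ℕ) : Finite (Submodule K (Fin n → K)) :=
  Finite.of_injective (fun W => (W : Set (Fin n → K))) SetLike.coe_injective

/-- The fiber of the span map over a fixed `k`-dimensional `W` is equivalent to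
the set of linearly independent `k`-tuples in `W`. -/
noncomputable def gaussFiberEquiv (n k : ℕ) (W : Submodule K (Fin n → K))
    (hW : finrank K ↥W = k) :
    {s : {s : Fin k → (Fin n → K) // LinearIndependent K s} //
        Submodule.span K (Set.range s.1) = W}
      ≃ {s : Fin k → ↥W // LinearIndependent K s} where
  toFun s := ⟨fun i => ⟨s.1.1 i, by
      have : s.1.1 i ∈ Submodule.span K (Set.range s.1.1) :=
        Submodule.subset_span (Set.mem_range_self i)
      rwa [s.2] at this⟩, by
    apply LinearIndependent.of_comp W.subtype
    exact s.1.2⟩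
  invFun s := ⟨⟨fun i => (s.1 i : Fin n → K), s.2.map' W.subtype (Submodule.ker_subtype W)⟩, by
    have hspan : Submodule.span K (Set.range s.1) = (⊤ : Submodule K ↥W) := by
      apply Submodule.eq_top_of_finrank_eq
      rw [finrank_span_eq_card s.2, Fintype.card_fin, hW]
    show Submodule.span K (Set.range fun i => ((s.1 i : Fin n → K))) = W
    have : (fun i => ((s.1 i : Fin n → K))) = W.subtype ∘ s.1 := rfl
    rw [this, Set.range_comp, ← Submodule.map_span, hspan, Submodule.map_top,
      Submodule.range_subtype]⟩
  left_inv s := by ext i; rfl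
  right_inv s := by ext i; rfl

lemma gauss_card_subspaces_mul (n k : ℕ) (hk : k ≤ n) :
    Nat.card {W : Submodule K (Fin n → K) // finrank K ↥W = k} *
      ∏ i ∈ range k, (Fintype.card K ^ k - Fintype.card K ^ i)
    = ∏ i ∈ range k, (Fintype.card K ^ n - Fintype.card K ^ i) := by
  classical
  have hfr : finrank K (Fin n → K) = n := by
    simp [Module.finrank_fintype_fun_eq_card]
  have htot : Nat.card {s : Fin k → (Fin n → K) // LinearIndependent K s}
      = ∏ i ∈ range k, (Fintype.card K ^ n - Fintype.card K ^ i) := by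
    rw [card_linearIndependent (by rw [hfr]; exact hk), hfr,
      ← Fin.prod_univ_eq_prod_range]
  set f : {s : Fin k → (Fin n → K) // LinearIndependent K s} →
      {W : Submodule K (Fin n → K) // finrank K ↥W = k} :=
    fun s => ⟨Submodule.span K (Set.range s.1), by
      rw [finrank_span_eq_card s.2, Fintype.card_fin]⟩ with hf
  have hsig := Nat.card_congr (Equiv.sigmaFiberEquiv f).symm
  have hfib : ∀ W : {W : Submodule K (Fin n → K) // finrank K ↥W = k},
      Nat.card {s // f s = W}
        = ∏ i ∈ range k, (Fintype.card K ^ k - Fintype.card K ^ i) := by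
    intro W
    have he : {s // f s = W} ≃ {s : Fin k → ↥W.1 // LinearIndependent K s} := by
      refine Equiv.trans ?_ (gaussFiberEquiv n k W.1 W.2)
      exact Equiv.subtypeEquivRight (fun s => by
        constructor
        · intro h; exact congrArg Subtype.val h
        · intro h; exact Subtype.ext h)
    rw [Nat.card_congr he, card_linearIndependent (by rw [W.2]), W.2,
      ← Fin.prod_univ_eq_prod_range]
  obtain ⟨_⟩ := nonempty_fintype {W : Submodule K (Fin n → K) // finrank K ↥W = k}
  have hsum : Nat.card {s : Fin k → (Fin n → K) // LinearIndependent K s}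
      = ∑ W : {W : Submodule K (Fin n → K) // finrank K ↥W = k},
          Nat.card {s // f s = W} := by
    rw [hsig, Nat.card_eq_fintype_card, Fintype.card_sigma]
    simp [Nat.card_eq_fintype_card]
  rw [← htot, hsum, Finset.sum_congr rfl (fun W _ => hfib W), Finset.sum_const,
    Finset.card_univ, smul_eq_mul, Nat.card_eq_fintype_card]

lemma gauss_ncard_subspaces (q n k : ℕ) (hq : Fintype.card K = q) (hk : k ≤ n) :
    {A : Submodule K (Fin n → K) | finrank K ↥A = k}.ncard = gauss q n k := by
  subst hq
  set q := Fintype.card K with hqdef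
  have hq2 : 2 ≤ q := Fintype.one_lt_card
  have hΦpos : 0 < ∏ i ∈ range k, (q^k - q^i) := by
    apply Finset.prod_pos
    intro i hi
    exact Nat.sub_pos_of_lt (Nat.pow_lt_pow_right hq2 (Finset.mem_range.1 hi))
  have hcastP : ∀ m : ℕ, k ≤ m →
      ((∏ i ∈ range k, (q^m - q^i) : ℕ) : ℤ)
        = ∏ i ∈ range k, ((q:ℤ)^m - (q:ℤ)^i) := by
    intro m hm
    rw [Nat.cast_prod]
    refine Finset.prod_congr rfl (fun i hi => ?_)
    have hle : q^i ≤ q^m :=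
      Nat.pow_le_pow_right (le_trans one_le_two hq2)
        (le_trans (le_of_lt (Finset.mem_range.1 hi)) hm)
    push_cast [Nat.cast_sub hle]
    ring
  have hgauss : gauss q n k * ∏ i ∈ range k, (q^k - q^i)
      = ∏ i ∈ range k, (q^n - q^i) := by
    have hz := gauss_id q n k
    have : ((gauss q n k * ∏ i ∈ range k, (q^k - q^i) : ℕ) : ℤ)
        = ((∏ i ∈ range k, (q^n - q^i) : ℕ) : ℤ) := by
      rw [Nat.cast_mul, hcastP k le_rfl, hcastP n hk, hz]
    exact_mod_cast this
  have hnc : {A : Submodule K (Fin n → K) | finrank K ↥A = k}.ncard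
      = Nat.card {W : Submodule K (Fin n → K) // finrank K ↥W = k} := by
    rw [← Nat.card_coe_set_eq]
    rfl
  rw [hnc]
  exact Nat.eq_of_mul_eq_mul_right hΦpos
    (by rw [gauss_card_subspaces_mul n k hk, hgauss])

omit [Fintype K] in
lemma gauss_exists_sub {V : Type*} [AddCommGroup V] [Module K V]
    [FiniteDimensional K V] (W : Submodule K V) (j : ℕ) (hj : j ≤ finrank K ↥W) :
    ∃ B : Submodule K V, B ≤ W ∧ finrank K ↥B = j := by
  classical
  let b := finBasis K ↥W
  have hli : LinearIndependent K
      (fun i : Fin j => ((b (Fin.castLE hj i) : ↥W) : V)) := by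
    have h1 : LinearIndependent K (fun i : Fin (finrank K ↥W) => ((b i : ↥W) : V)) :=
      b.linearIndependent.map' W.subtype (Submodule.ker_subtype W)
    exact h1.comp (Fin.castLE hj) (Fin.castLE_injective hj)
  refine ⟨Submodule.span K (Set.range fun i : Fin j => ((b (Fin.castLE hj i) : ↥W) : V)),
    ?_, ?_⟩
  · rw [Submodule.span_le]
    rintro x ⟨i, rfl⟩
    exact (b (Fin.castLE hj i)).2
  · rw [finrank_span_eq_card hli, Fintype.card_fin]

end Counting

/-- let `d = 2t`, `n ≥ d+2`, and let `F` be a family of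
subspaces of `F_q^n` of diameter at most `d` containing the zero subspace and
satisfying `|F(k)| + |F(n−k)| = C_q(n,k)` for all `k ≤ t`. Then for every
`k ≤ t`, the layer `F(k)` consists of all `k`-dimensional subspaces and
`F(n−k)` is empty. -/
theorem rigidity_even (q n t : ℕ) (K : Type*) [Field K] [Fintype K]
    (hq : Fintype.card K = q) (hn : 2 * t + 2 ≤ n)
    (F : Set (Submodule K (Fin n → K)))
    (hdiam : ∀ A ∈ F, ∀ B ∈ F, sdelta K (Fin n → K) A B ≤ 2 * t)
    (h0 : (⊥ : Submodule K (Fin n → K)) ∈ F)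
    (heq : ∀ k ≤ t,
      {A ∈ F | finrank K ↥A = k}.ncard + {A ∈ F | finrank K ↥A = n - k}.ncard
        = gauss q n k) :
    ∀ k ≤ t,
      {A ∈ F | finrank K ↥A = k}
          = {A : Submodule K (Fin n → K) | finrank K ↥A = k} ∧
        {A ∈ F | finrank K ↥A = n - k} = ∅ := by
  have hfr : finrank K (Fin n → K) = n := by
    simp [Module.finrank_fintype_fun_eq_card]
  -- from emptiness of the top layer, deduce fullness of the bottom layer
  have step : ∀ k ≤ t, {A ∈ F | finrank K ↥A = n - k} = ∅ →
      {A ∈ F | finrank K ↥A = k}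
        = {A : Submodule K (Fin n → K) | finrank K ↥A = k} := by
    intro k hk hempty
    have hcount := heq k hk
    rw [hempty, Set.ncard_empty, add_zero] at hcount
    refine Set.eq_of_subset_of_ncard_le (fun A hA => hA.2) ?_ (Set.toFinite _)
    rw [hcount, gauss_ncard_subspaces q n k hq (by omega)]
  intro k
  induction k with
  | zero =>
    intro hk
    have hempty : {A ∈ F | finrank K ↥A = n - 0} = ∅ := by
      ext A
      simp only [Set.mem_setOf_eq, Set.mem_empty_iff_false, iff_false, not_and]
      intro hA hdim
      have hd := hdiam ⊥ h0 A hA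
      rw [sdelta, finrank_bot, bot_inf_eq, finrank_bot] at hd
      omega
    exact ⟨step 0 hk hempty, hempty⟩
  | succ j ih =>
    intro hk
    have hj := ih (le_trans (Nat.le_succ j) hk)
    have hempty : {A ∈ F | finrank K ↥A = n - (j + 1)} = ∅ := by
      ext A
      simp only [Set.mem_setOf_eq, Set.mem_empty_iff_false, iff_false, not_and]
      intro hA hdim
      obtain ⟨C, hC⟩ := Submodule.exists_isCompl A
      have hCrank : finrank K ↥A + finrank K ↥C = n := by
        rw [Submodule.finrank_add_eq_of_isCompl hC, hfr]
      obtain ⟨B, hBC, hBrank⟩ := gauss_exists_sub C j (by omega)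
      have hBF : B ∈ F := by
        have : B ∈ {A : Submodule K (Fin n → K) | finrank K ↥A = j} := hBrank
        rw [← hj.1] at this
        exact this.1
      have hAB : A ⊓ B = ⊥ := by
        have : Disjoint A B := hC.disjoint.mono_right hBC
        exact disjoint_iff.1 this
      have hd := hdiam A hA B hBF
      rw [sdelta, hAB, finrank_bot, hBrank, hdim] at hd
      omega
    exact ⟨step (j+1) hk hempty, hempty⟩
end

section
/- Let V = F_q^n with n ≥ 5t+3 and t ≥ 2, and let K be a family of subspaces of V such that the zero subspace 0 ∈ K, all t-dimensional subspaces belong to K, and the set of (t+1)-dimensional members of K is nonempty and not contained in any star (i.e., there is no 1-dimensional Z with Z ≤ A for all (t+1)-dimensional A ∈ K). Then K is not contained in B(P,t) ∪ B(Q,t) for any pair of subspaces P ≤ Q with dim Q = dim P + 1. -/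
open Module

lemma exists_disjoint_subspace {K V : Type*} [Field K] [AddCommGroup V] [Module K V]
    [FiniteDimensional K V] (Q : Submodule K V) (k : ℕ)
    (hk : k + finrank K Q ≤ finrank K V) :
    ∃ T : Submodule K V, finrank K T = k ∧ T ⊓ Q = ⊥ := by
  induction k with
  | zero => exact ⟨⊥, finrank_bot K V, bot_inf_eq Q⟩
  | succ k ih =>
    obtain ⟨T, hTd, hTQ⟩ := ih (by omega)
    have hlt : finrank K ↥(T ⊔ Q) < finrank K V := by
      have h1 := Submodule.finrank_sup_add_finrank_inf_eq T Q
      omega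
    obtain ⟨x, hx⟩ := Submodule.exists_of_finrank_lt (T ⊔ Q) hlt
    have hxTQ : x ∉ T ⊔ Q := by
      have := hx 1 one_ne_zero
      simpa using this
    have hxne : x ≠ 0 := by
      rintro rfl; exact hxTQ (Submodule.zero_mem _)
    have hxT : x ∉ T := fun h => hxTQ (Submodule.mem_sup_left h)
    refine ⟨T ⊔ Submodule.span K {x}, ?_, ?_⟩
    · have hinf : T ⊓ Submodule.span K {x} = ⊥ := by
        rw [eq_bot_iff]
        intro v hv
        obtain ⟨hv1, hv2⟩ := Submodule.mem_inf.mp hv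
        rw [Submodule.mem_span_singleton] at hv2
        obtain ⟨c, rfl⟩ := hv2
        rcases eq_or_ne c 0 with rfl | hc
        · simp
        · exact absurd (by simpa [smul_smul, inv_mul_cancel₀ hc] using
            Submodule.smul_mem T c⁻¹ hv1) hxT
      have h1 := Submodule.finrank_sup_add_finrank_inf_eq T (Submodule.span K {x})
      rw [hinf, finrank_span_singleton hxne] at h1
      simp only [finrank_bot] at h1
      omega
    · rw [eq_bot_iff]
      intro v hv
      obtain ⟨hv1, hv2⟩ := Submodule.mem_inf.mp hv
      obtain ⟨u, hu, w, hw, rfl⟩ := Submodule.mem_sup.mp hv1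
      rw [Submodule.mem_span_singleton] at hw
      obtain ⟨c, rfl⟩ := hw
      rcases eq_or_ne c 0 with rfl | hc
      · have : u ∈ T ⊓ Q := ⟨hu, by simpa using hv2⟩
        rw [hTQ] at this
        simpa using this
      · exfalso
        apply hxTQ
        have h1 : (u + c • x) - u ∈ T ⊔ Q :=
          Submodule.sub_mem _ (Submodule.mem_sup_right hv2) (Submodule.mem_sup_left hu)
        have h2 : c • x ∈ T ⊔ Q := by simpa using h1
        have := Submodule.smul_mem (T ⊔ Q) c⁻¹ h2
        rwa [smul_smul, inv_mul_cancel₀ hc, one_smul] at this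

/-- let `n ≥ 5t+3`, `t ≥ 2`, and let `𝒦` be a family of
subspaces of `F_q^n` containing the zero subspace and all `t`-dimensional
subspaces, whose `(t+1)`-layer is nonempty and not contained in any star.
Then `𝒦` is not contained in `B(P,t) ∪ B(Q,t)` for any subspaces `P ≤ Q`
with `dim Q = dim P + 1`. -/
theorem not_in_adjacent_double_ball (q n t : ℕ) (K : Type*) [Field K]
    [Fintype K] (hq : Fintype.card K = q) (ht : 2 ≤ t) (hn : 5 * t + 3 ≤ n)
    (𝒦 : Set (Submodule K (Fin n → K)))
    (h0 : (⊥ : Submodule K (Fin n → K)) ∈ 𝒦)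
    (hT : ∀ A : Submodule K (Fin n → K), finrank K ↥A = t → A ∈ 𝒦)
    (htop : ∃ A ∈ 𝒦, finrank K ↥A = t + 1)
    (hstar : ¬ ∃ Z : Submodule K (Fin n → K), finrank K ↥Z = 1 ∧
      ∀ A ∈ 𝒦, finrank K ↥A = t + 1 → Z ≤ A) :
    ∀ P Q : Submodule K (Fin n → K), P ≤ Q →
      finrank K ↥Q = finrank K ↥P + 1 →
      ¬ (𝒦 ⊆ {A | sdelta K (Fin n → K) A P ≤ t}
          ∪ {A | sdelta K (Fin n → K) A Q ≤ t}) := by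
  intro P Q hPQ hdim hsub
  have hV : finrank K (Fin n → K) = n := Module.finrank_fin_fun K
  have sbot : ∀ U W : Submodule K (Fin n → K), U ⊓ W = ⊥ →
      sdelta K (Fin n → K) U W = finrank K ↥U + finrank K ↥W := by
    intro U W h
    unfold sdelta
    rw [h, finrank_bot]
    omega
  -- Step 1: from ⊥ ∈ 𝒦, dim P ≤ t
  have hP : finrank K ↥P ≤ t := by
    rcases hsub h0 with h | h <;> simp only [Set.mem_setOf_eq] at h
    · rw [sbot ⊥ P (bot_inf_eq P), finrank_bot] at h; omega
    · rw [sbot ⊥ Q (bot_inf_eq Q), finrank_bot] at h; omega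
  -- Step 2: pick T of dim t with T ⊓ Q = ⊥
  obtain ⟨T, hTd, hTQ⟩ := exists_disjoint_subspace Q t (by
    have h1 := Submodule.finrank_le Q
    omega)
  have hTP : T ⊓ P = ⊥ := by
    rw [eq_bot_iff, ← hTQ]
    exact inf_le_inf_left T hPQ
  have hP0 : finrank K ↥P = 0 := by
    rcases hsub (hT T hTd) with h | h <;> simp only [Set.mem_setOf_eq] at h
    · rw [sbot T P hTP, hTd] at h; omega
    · rw [sbot T Q hTQ, hTd] at h; omega
  have hPbot : P = ⊥ := Submodule.finrank_eq_zero.mp hP0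
  have hQ1 : finrank K ↥Q = 1 := by omega
  -- Step 3: Q is a star center, contradicting hstar
  apply hstar
  refine ⟨Q, hQ1, fun A hA hAd => ?_⟩
  rcases hsub hA with h | h <;> simp only [Set.mem_setOf_eq] at h
  · rw [hPbot, sbot A ⊥ (inf_bot_eq A), finrank_bot, hAd] at h
    omega
  · have hle : finrank K ↥(A ⊓ Q) ≤ 1 := hQ1 ▸ Submodule.finrank_mono inf_le_right
    simp only [sdelta, hAd, hQ1] at h
    have heq : A ⊓ Q = Q :=
      Submodule.eq_of_le_of_finrank_eq inf_le_right (by omega)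
    exact heq ▸ inf_le_left
end
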